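/- Let C ⊆ [0,1]^X (X finite) be a compact convex set of functions with f(x) > 0 allowed to fail (value 0 gives +∞), and define J(f,P) = Σ_x P(x) log(1/f(x)) for probability distributions P on X. Then max_P min_{f∈C} J(f,P) = min_{f∈C} max_P J(f,P) = min_{f∈C} max_x log(1/f(x)). -/
import Mathlib


def IsProb {Z : Type*} [Fintype Z] (P : Z → ℝ) : Prop :=
  (∀ z, 0 ≤ P z) ∧ ∑ z, P z = 1

/-- `J(f,P) = Σ_x P(x) log(1/f(x))` as an extended real, with the convention that
a term with `f(x) = 0` and `P(x) > 0` contributes `+∞`, while `P(x) = 0`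
contributes `0` regardless of `f(x)`. -/
noncomputable def Jfun {X : Type*} [Fintype X] (f : X → ℝ) (P : X → ℝ) : EReal :=
  ∑ x, if f x = 0 ∧ P x ≠ 0 then (⊤ : EReal)
       else ((P x * Real.log (1 / f x) : ℝ) : EReal)

open Finset

section AuxMinimax

lemma ereal_coe_sum' {X : Type*} (s : Finset X) (g : X → ℝ) :
    ((∑ x ∈ s, g x : ℝ) : EReal) = ∑ x ∈ s, ((g x : EReal)) :=
  map_sum (⟨⟨Real.toEReal, EReal.coe_zero⟩, EReal.coe_add⟩ : ℝ →+ EReal) _ _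

variable {X : Type*} [Fintype X] [Nonempty X]

lemma jterm_nonneg {f P : X → ℝ} (hf : ∀ x, f x ∈ Set.Icc (0:ℝ) 1)
    (hP : ∀ x, 0 ≤ P x) (x : X) :
    (0 : EReal) ≤ (if f x = 0 ∧ P x ≠ 0 then (⊤:EReal)
      else ((P x * Real.log (1 / f x) : ℝ) : EReal)) := by
  split
  · exact le_top
  · rw [← EReal.coe_zero, EReal.coe_le_coe_iff]
    apply mul_nonneg (hP x)
    rcases eq_or_lt_of_le (hf x).1 with h | h
    · simp [← h]
    · exact Real.log_nonneg (one_le_one_div h (hf x).2)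

lemma jterm_le_Jfun {f P : X → ℝ} (hf : ∀ x, f x ∈ Set.Icc (0:ℝ) 1)
    (hP : ∀ x, 0 ≤ P x) (x : X) :
    (if f x = 0 ∧ P x ≠ 0 then (⊤:EReal)
      else ((P x * Real.log (1 / f x) : ℝ) : EReal)) ≤ Jfun f P :=
  Finset.single_le_sum (fun y _ => jterm_nonneg hf hP y) (mem_univ x)

lemma continuous_finset_inf'' (s : Finset X) (hs : s.Nonempty) :
    Continuous fun f : X → ℝ => s.inf' hs f := by
  induction hs using Finset.Nonempty.cons_induction with
  | singleton a => simpa using continuous_apply a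
  | cons a s ha hs ih =>
      exact ((continuous_apply a).min ih).congr fun f => (Finset.inf'_cons hs f).symm

/-- second equality, inner part -/
lemma sup_J_eq (f : X → ℝ) (hf : ∀ x, f x ∈ Set.Icc (0:ℝ) 1) :
    (⨆ P : {P : X → ℝ // IsProb P}, Jfun f P.1) =
      ⨆ x : X, (if f x = 0 then (⊤ : EReal) else ((Real.log (1 / f x) : ℝ) : EReal)) := by
  classical
  apply le_antisymm
  · apply iSup_le
    rintro ⟨P, hP⟩
    by_cases hz : ∃ x, f x = 0
    · obtain ⟨x, hx⟩ := hz
      refine le_trans le_top ?_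
      have := le_iSup (fun x => if f x = 0 then (⊤ : EReal)
        else ((Real.log (1 / f x) : ℝ) : EReal)) x
      rwa [if_pos hx] at this
    · push_neg at hz
      have hJ : Jfun f P = ((∑ x, P x * Real.log (1 / f x) : ℝ) : EReal) := by
        rw [Jfun, ereal_coe_sum']
        exact Finset.sum_congr rfl fun x _ => by rw [if_neg (by tauto)]
      obtain ⟨x0, -, hx0⟩ := Finset.exists_max_image univ
        (fun x => Real.log (1 / f x)) univ_nonempty
      have hre : ∑ x, P x * Real.log (1 / f x) ≤ Real.log (1 / f x0) := by
        calc ∑ x, P x * Real.log (1 / f x) ≤ ∑ x, P x * Real.log (1 / f x0) :=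
              Finset.sum_le_sum fun x _ =>
                mul_le_mul_of_nonneg_left (hx0 x (mem_univ x)) (hP.1 x)
          _ = Real.log (1 / f x0) := by rw [← Finset.sum_mul, hP.2, one_mul]
      rw [hJ]
      refine le_trans (EReal.coe_le_coe_iff.mpr hre) ?_
      have := le_iSup (fun x => if f x = 0 then (⊤ : EReal)
        else ((Real.log (1 / f x) : ℝ) : EReal)) x0
      rwa [if_neg (hz x0)] at this
  · apply iSup_le
    intro x
    set δ : X → ℝ := fun y => if y = x then (1:ℝ) else 0 with hδdef
    have hδn : ∀ y, 0 ≤ δ y := fun y => by dsimp [δ]; split <;> norm_num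
    have hδ : IsProb δ := ⟨hδn, by simp [δ]⟩
    have h1 : (if f x = 0 ∧ δ x ≠ 0 then (⊤:EReal)
        else ((δ x * Real.log (1 / f x) : ℝ) : EReal)) =
        (if f x = 0 then (⊤ : EReal) else ((Real.log (1 / f x) : ℝ) : EReal)) := by
      have hδx : δ x = 1 := if_pos rfl
      by_cases h : f x = 0 <;> simp [h, hδx]
    calc (if f x = 0 then (⊤ : EReal) else ((Real.log (1 / f x) : ℝ) : EReal))
        = _ := h1.symm
      _ ≤ Jfun f δ := jterm_le_Jfun hf hδn x
      _ ≤ ⨆ P : {P : X → ℝ // IsProb P}, Jfun f P.1 :=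
          le_iSup (fun P : {P : X → ℝ // IsProb P} => Jfun f P.1) ⟨δ, hδ⟩

end AuxMinimax

set_option maxHeartbeats 1000000 in
/-- for a nonempty compact convex `C ⊆ [0,1]^X`,
`max_P min_{f∈C} J(f,P) = min_{f∈C} max_P J(f,P) = min_{f∈C} max_x log(1/f(x))`. -/
theorem minimax_J {X : Type*} [Fintype X] [Nonempty X]
    (C : Set (X → ℝ)) (hC₀ : C.Nonempty) (hC₁ : IsCompact C) (hC₂ : Convex ℝ C)
    (hC₃ : ∀ f ∈ C, ∀ x, f x ∈ Set.Icc (0 : ℝ) 1) :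
    (⨆ P : {P : X → ℝ // IsProb P}, ⨅ f : C, Jfun f.1 P.1) =
      (⨅ f : C, ⨆ P : {P : X → ℝ // IsProb P}, Jfun f.1 P.1) ∧
    (⨅ f : C, ⨆ P : {P : X → ℝ // IsProb P}, Jfun f.1 P.1) =
      (⨅ f : C, ⨆ x : X,
        if f.1 x = 0 then (⊤ : EReal) else ((Real.log (1 / f.1 x) : ℝ) : EReal)) := by
  classical
  have hBD : (⨅ f : C, ⨆ P : {P : X → ℝ // IsProb P}, Jfun f.1 P.1) =
      (⨅ f : C, ⨆ x : X,
        if f.1 x = 0 then (⊤ : EReal) else ((Real.log (1 / f.1 x) : ℝ) : EReal)) :=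
    iInf_congr fun f => sup_J_eq f.1 (hC₃ f.1 f.2)
  refine ⟨?_, hBD⟩
  have hAB : (⨆ P : {P : X → ℝ // IsProb P}, ⨅ f : C, Jfun f.1 P.1) ≤
      (⨅ f : C, ⨆ P : {P : X → ℝ // IsProb P}, Jfun f.1 P.1) := iSup_iInf_le_iInf_iSup _
  obtain ⟨fs, hfsC, hfsmax⟩ := hC₁.exists_isMaxOn hC₀
    (continuous_finset_inf'' Finset.univ Finset.univ_nonempty).continuousOn
  set c : ℝ := Finset.univ.inf' Finset.univ_nonempty fs with hcdef
  have hcle : ∀ x, c ≤ fs x := fun x => Finset.inf'_le _ (mem_univ x)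
  have hmax : ∀ f ∈ C, Finset.univ.inf' Finset.univ_nonempty f ≤ c := fun f hf => hfsmax hf
  have hc0 : 0 ≤ c := by
    obtain ⟨x1, -, hx1⟩ := Finset.exists_mem_eq_inf' Finset.univ_nonempty fs
    rw [hcdef, hx1]
    exact (hC₃ fs hfsC x1).1
  rcases hc0.lt_or_eq with hc | hc
  · -- c > 0 : Hahn-Banach separation argument
    set U : Set (X → ℝ) := {v | ∀ x, c < v x} with hU
    have hUiInter : U = ⋂ x, {v : X → ℝ | c < v x} := by
      ext v; simp [hU, Set.mem_iInter]
    have hUopen : IsOpen U := by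
      rw [hUiInter]
      exact isOpen_iInter_of_finite fun x => isOpen_lt continuous_const (continuous_apply x)
    have hUconv : Convex ℝ U := by
      rw [hUiInter]
      exact convex_iInter fun x => convex_halfSpace_gt ⟨fun a b => rfl, fun r a => rfl⟩ c
    have hdisj : Disjoint U C := by
      rw [Set.disjoint_left]
      intro f hfU hfC
      obtain ⟨x1, -, hx1⟩ := Finset.exists_mem_eq_inf' Finset.univ_nonempty f
      have h1 : c < Finset.univ.inf' Finset.univ_nonempty f := by rw [hx1]; exact hfU x1
      exact absurd (hmax f hfC) (not_le.mpr h1)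
    obtain ⟨φ, u, hUlt, hCge⟩ := geometric_hahn_banach_open hUconv hUopen hC₂ hdisj
    set y : X → ℝ := fun x => -φ (fun j => if x = j then (1:ℝ) else 0) with hy
    have hv0U : (fun _ : X => c + 1) ∈ U := fun x => by
      show c < c + 1; linarith
    have hyn : ∀ x, 0 ≤ y x := by
      intro x
      rw [hy]; dsimp only; rw [neg_nonneg]
      by_contra hpos
      push_neg at hpos
      set s : ℝ := (u - φ (fun _ => c + 1)) / φ (fun j => if x = j then (1:ℝ) else 0) with hs
      have hu0 : φ (fun _ => c+1) < u := hUlt _ hv0U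
      have hs0 : 0 ≤ s := le_of_lt (div_pos (by linarith) hpos)
      have hmem : ((fun _ : X => c + 1) + s • (fun j => if x = j then (1:ℝ) else 0)) ∈ U := by
        intro j
        show c < (c + 1) + s * (if x = j then (1:ℝ) else 0)
        have h2 : 0 ≤ s * (if x = j then (1:ℝ) else 0) := by
          apply mul_nonneg hs0; split <;> norm_num
        linarith
      have hlt := hUlt _ hmem
      rw [map_add, map_smul, smul_eq_mul, hs,
        div_mul_cancel₀ _ (ne_of_gt hpos)] at hlt
      linarith
    have hφv : ∀ v : X → ℝ, φ v = -∑ x, v x * y x := by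
      intro v
      have h1 : φ v = ∑ x, v x * φ (fun j => if x = j then (1:ℝ) else 0) := by
        conv_lhs => rw [pi_eq_sum_univ v]
        rw [map_sum]
        simp only [map_smul, smul_eq_mul]
      rw [h1, ← Finset.sum_neg_distrib]
      exact Finset.sum_congr rfl fun x _ => by rw [hy]; ring
    set Y : ℝ := ∑ x, y x with hYdef
    have hY0 : 0 ≤ Y := Finset.sum_nonneg fun x _ => hyn x
    have hYpos : 0 < Y := by
      rcases hY0.lt_or_eq with h | h
      · exact h
      · exfalso
        have hall : ∀ x ∈ Finset.univ, y x = 0 :=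
          (Finset.sum_eq_zero_iff_of_nonneg (fun x _ => hyn x)).mp h.symm
        have hzero : ∀ v : X → ℝ, φ v = 0 := fun v => by
          rw [hφv v, Finset.sum_eq_zero fun x hx => by rw [hall x (mem_univ x), mul_zero],
            neg_zero]
        obtain ⟨f0, hf0⟩ := hC₀
        have h1 := hUlt _ hv0U
        have h2 := hCge f0 hf0
        rw [hzero] at h1
        rw [hzero] at h2
        linarith
    have hcu : -(c * Y) ≤ u := by
      by_contra hlt
      push_neg at hlt
      set ε : ℝ := (-(c*Y) - u) / Y with hε
      have hε0 : 0 < ε := div_pos (by linarith) hYpos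
      have hvε : (fun _ : X => c + ε) ∈ U := fun x => by show c < c + ε; linarith
      have h1 := hUlt _ hvε
      rw [hφv] at h1
      have hsum : ∑ x, (c + ε) * y x = (c + ε) * Y := by rw [← Finset.mul_sum]
      rw [hsum] at h1
      have hεY : ε * Y = -(c*Y) - u := by
        rw [hε, div_mul_cancel₀ _ (ne_of_gt hYpos)]
      nlinarith
    set P : X → ℝ := fun x => y x / Y with hPdef
    have hPprob : IsProb P := by
      constructor
      · exact fun x => div_nonneg (hyn x) hY0
      · show ∑ x, y x / Y = 1
        rw [← Finset.sum_div, ← hYdef, div_self (ne_of_gt hYpos)]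
    have hkey : ∀ f ∈ C, ∑ x, P x * f x ≤ c := by
      intro f hf
      have h1 : u ≤ -∑ x, f x * y x := by rw [← hφv]; exact hCge f hf
      have h2 : ∑ x, f x * y x ≤ c * Y := by linarith
      have h3 : ∑ x, P x * f x = (∑ x, f x * y x) / Y := by
        rw [Finset.sum_div]
        exact Finset.sum_congr rfl fun x _ => by rw [hPdef]; ring
      rw [h3, div_le_iff₀ hYpos]
      linarith
    have hlog : ∀ f ∈ C, ((Real.log (1 / c) : ℝ) : EReal) ≤ Jfun f P := by
      intro f hf
      by_cases hcase : ∃ x, f x = 0 ∧ P x ≠ 0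
      · obtain ⟨x, hx⟩ := hcase
        have h1 := jterm_le_Jfun (hC₃ f hf) hPprob.1 x
        rw [if_pos hx] at h1
        exact le_trans le_top h1
      · push_neg at hcase
        have hJ : Jfun f P = ((∑ x, P x * Real.log (1 / f x) : ℝ) : EReal) := by
          rw [Jfun, ereal_coe_sum']
          refine Finset.sum_congr rfl fun x _ => ?_
          rw [if_neg]
          rintro ⟨h1, h2⟩; exact h2 (hcase x h1)
        rw [hJ, EReal.coe_le_coe_iff]
        set T : Finset X := Finset.univ.filter (fun x => P x ≠ 0) with hT
        have hsub : ∀ g : X → ℝ, ∑ x ∈ T, P x * g x = ∑ x, P x * g x := fun g =>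
          Finset.sum_filter_of_ne fun x _ h => left_ne_zero_of_mul h
        have hT1 : ∑ x ∈ T, P x = 1 := by
          rw [hT, Finset.sum_filter_of_ne fun x _ h => h]
          exact hPprob.2
        have hfpos : ∀ x ∈ T, f x ∈ Set.Ioi (0:ℝ) := by
          intro x hx
          have hPx : P x ≠ 0 := (Finset.mem_filter.mp hx).2
          have hfx : f x ≠ 0 := fun h => hPx (hcase x h)
          exact lt_of_le_of_ne (hC₃ f hf x).1 (Ne.symm hfx)
        have hjen := (strictConcaveOn_log_Ioi.concaveOn).le_map_sum
          (fun x (_ : x ∈ T) => hPprob.1 x) hT1 hfpos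
        have hsum0 : 0 < ∑ x ∈ T, P x * f x := by
          have hTne : T.Nonempty := by
            by_contra hTe
            rw [Finset.not_nonempty_iff_eq_empty] at hTe
            rw [hTe, Finset.sum_empty] at hT1
            norm_num at hT1
          obtain ⟨x, hx⟩ := hTne
          refine Finset.sum_pos' (fun z hz => mul_nonneg (hPprob.1 z) (le_of_lt (hfpos z hz)))
            ⟨x, hx, mul_pos ?_ (hfpos x hx)⟩
          exact lt_of_le_of_ne (hPprob.1 x) (Ne.symm (Finset.mem_filter.mp hx).2)
        have hle : Real.log (∑ x ∈ T, P x * f x) ≤ Real.log c := by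
          apply Real.log_le_log hsum0
          calc ∑ x ∈ T, P x * f x = ∑ x, P x * f x := hsub f
            _ ≤ c := hkey f hf
        have hjen' : ∑ x ∈ T, P x * Real.log (f x) ≤ Real.log c := by
          refine le_trans ?_ hle
          simpa only [smul_eq_mul] using hjen
        calc Real.log (1/c) = -Real.log c := by rw [one_div, Real.log_inv]
          _ ≤ -∑ x ∈ T, P x * Real.log (f x) := neg_le_neg hjen'
          _ = ∑ x ∈ T, P x * Real.log (1 / f x) := by
              rw [← Finset.sum_neg_distrib]
              exact Finset.sum_congr rfl fun x _ => by rw [one_div, Real.log_inv]; ring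
          _ = ∑ x, P x * Real.log (1 / f x) := hsub _
    have hfspos : ∀ x, 0 < fs x := fun x => lt_of_lt_of_le hc (hcle x)
    have hD : (⨅ f : C, ⨆ x : X,
        if f.1 x = 0 then (⊤:EReal) else ((Real.log (1/f.1 x) : ℝ):EReal)) ≤
        ((Real.log (1/c) : ℝ) : EReal) := by
      refine le_trans (iInf_le _ ⟨fs, hfsC⟩) ?_
      apply iSup_le
      intro x
      rw [if_neg (ne_of_gt (hfspos x))]
      apply EReal.coe_le_coe_iff.mpr
      exact Real.log_le_log (one_div_pos.mpr (hfspos x)) (one_div_le_one_div_of_le hc (hcle x))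
    refine le_antisymm hAB ?_
    rw [hBD]
    refine le_trans hD (le_trans ?_ (le_iSup
      (fun P : {P : X → ℝ // IsProb P} => ⨅ f : C, Jfun f.1 P.1) ⟨P, hPprob⟩))
    exact le_iInf fun f => hlog f.1 f.2
  · -- c = 0 : a common zero coordinate exists
    have hzero : ∃ x0, ∀ f ∈ C, f x0 = 0 := by
      by_contra h
      push_neg at h
      choose F hFC hFx using h
      have hn : (0:ℝ) < (Fintype.card X : ℝ) := by exact_mod_cast Fintype.card_pos
      have hgC : (∑ x, ((Fintype.card X : ℝ)⁻¹) • F x) ∈ C := by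
        refine hC₂.sum_mem (fun x _ => by positivity) ?_ (fun x _ => hFC x)
        rw [Finset.sum_const, Finset.card_univ, nsmul_eq_mul,
          mul_inv_cancel₀ (ne_of_gt hn)]
      set g : X → ℝ := ∑ x, ((Fintype.card X : ℝ)⁻¹) • F x with hg
      obtain ⟨x1, -, hx1⟩ := Finset.exists_mem_eq_inf' Finset.univ_nonempty g
      have hgx : g x1 = ∑ z, (Fintype.card X : ℝ)⁻¹ * F z x1 := by
        rw [hg, Finset.sum_apply]
        exact Finset.sum_congr rfl fun z _ => rfl
      have hgpos : 0 < g x1 := by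
        rw [hgx]
        refine Finset.sum_pos'
          (fun z _ => mul_nonneg (by positivity) ((hC₃ (F z) (hFC z) x1).1))
          ⟨x1, mem_univ x1, ?_⟩
        have h1 := (hC₃ (F x1) (hFC x1) x1).1
        have h2 := hFx x1
        have h3 : 0 < F x1 x1 := lt_of_le_of_ne h1 (Ne.symm h2)
        positivity
      have hle := hmax g hgC
      rw [hx1] at hle
      rw [← hc] at hle
      linarith
    obtain ⟨x0, hx0⟩ := hzero
    set δ : X → ℝ := fun z => if z = x0 then (1:ℝ) else 0 with hδ
    have hδn : ∀ z, 0 ≤ δ z := fun z => by rw [hδ]; dsimp only; split <;> norm_num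
    have hδP : IsProb δ := ⟨hδn, by rw [hδ]; simp⟩
    have htop : ∀ f : C, Jfun f.1 δ = ⊤ := by
      intro f
      have h1 := jterm_le_Jfun (hC₃ f.1 f.2) hδn x0
      rw [if_pos ⟨hx0 f.1 f.2, by rw [hδ]; simp⟩] at h1
      exact top_le_iff.mp h1
    have hA : (⊤:EReal) ≤ ⨆ P : {P : X → ℝ // IsProb P}, ⨅ f : C, Jfun f.1 P.1 := by
      refine le_trans ?_ (le_iSup
        (fun P : {P : X → ℝ // IsProb P} => ⨅ f : C, Jfun f.1 P.1) ⟨δ, hδP⟩)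
      exact le_iInf fun f => (htop f).ge
    exact le_antisymm hAB (le_trans le_top hA)
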